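/- Let (c_n)_{n≥1} be a sequence of integers satisfying c_n·n ≡ 2^{n-1} (mod 2^n) for every n ≥ 1. Then the rescaled system with variables y and z_{ij} (1 ≤ j ≤ i), whose expressions are T_i = 2^i·z_{i1} + ... + 2^i·z_{ii} + c_i·y for each i ≥ 1, together with each 2^i·z_{ij} and y, is NOT image partition regular: there exists a 2-colouring χ : ℕ → Fin 2 such that no integers y and z_{ij} make y, every 2^i·z_{ij}, and every T_i positive natural numbers all of the same colour under χ. -/

import Mathlib

/-!
Write `y = 2^v·y'` with `y'` odd and take `n = 2^v·u` with `u` odd. Then `u·c_n·y = c_n·n·y'`,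
which is `2^(n-1)·y'` modulo `2^n`, while the `z`-part of `T_n` is divisible by `2^n`; hence `T_n`
has `2`-adic valuation exactly `n - 1`. Colouring `m` by whether `3 ∣ v₂(m) + 1` therefore gives
`T_{2^v}` and `T_{3·2^v}` different colours, whatever `y` is.
-/

theorem padicValInt_eq_of_dvd_of_not_dvd {p m : ℕ} [Fact p.Prime] {a : ℤ}
    (h : (p : ℤ) ^ m ∣ a) (h' : ¬ (p : ℤ) ^ (m + 1) ∣ a) : padicValInt p a = m := by
  have ha : a ≠ 0 := by rintro rfl; exact h' (dvd_zero _)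
  rw [padicValInt_dvd_iff] at h h'
  omega

theorem padicValInt_add_mul_eq_sub_one {p n : ℕ} [Fact p.Prime] {c y S u y' : ℤ} (hn : n ≠ 0)
    (hc : c * n ≡ p ^ (n - 1) [ZMOD p ^ n]) (hS : (p : ℤ) ^ n ∣ S)
    (hu : ¬ (p : ℤ) ∣ u) (hy' : ¬ (p : ℤ) ∣ y') (huy : u * y = n * y') :
    padicValInt p (S + c * y) = n - 1 := by
  have hp : Prime (p : ℤ) := Nat.prime_iff_prime_int.mp Fact.out
  have hmod : u * (S + c * y) ≡ p ^ (n - 1) * y' [ZMOD p ^ n] :=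
    calc u * (S + c * y) = u * S + c * n * y' := by linear_combination c * huy
      _ ≡ 0 + p ^ (n - 1) * y' [ZMOD p ^ n] :=
        (Int.modEq_zero_iff_dvd.mpr (hS.mul_left u)).add (hc.mul_right y')
      _ = p ^ (n - 1) * y' := zero_add _
  have hpow : (p : ℤ) ^ n = p ^ (n - 1) * p := by rw [← pow_succ, Nat.sub_add_cancel (by omega)]
  apply padicValInt_eq_of_dvd_of_not_dvd
  · refine (hp.coprime_iff_not_dvd.mpr hu).pow_left.dvd_of_dvd_mul_left ?_
    exact (hmod.of_dvd (pow_dvd_pow _ (n.sub_le 1))).dvd_iff.mpr (dvd_mul_right _ _)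
  · rw [Nat.sub_add_cancel (by omega)]
    intro hdvd
    have : (p : ℤ) ^ n ∣ p ^ (n - 1) * y' := hmod.dvd_iff.mp (hdvd.mul_left u)
    rw [hpow] at this
    exact hy' ((mul_dvd_mul_iff_left (pow_ne_zero _ hp.ne_zero)).mp this)

def twoAdicColouring (m : ℕ) : Fin 2 := if 3 ∣ padicValNat 2 m + 1 then 1 else 0

theorem twoAdicColouring_of_padicValInt_eq {T : ℤ} {n : ℕ} (hT : 0 ≤ T) (hn : n ≠ 0)
    (hval : padicValInt 2 T = n - 1) : twoAdicColouring T.toNat = if 3 ∣ n then 1 else 0 := by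
  rw [twoAdicColouring, ← padicValInt.of_nat, Int.toNat_of_nonneg hT, hval,
    Nat.sub_add_cancel (by omega)]

/-- **The rescaled system is not image partition regular.**
Let `(c_n)` satisfy `c_n·n ≡ 2^(n-1) (mod 2^n)` for every `n ≥ 1`. Then the
rescaled system with variables `y` and `z_{ij}` (`1 ≤ j ≤ i`), whose
expressions are `T_i = 2^i·z_{i1} + ⋯ + 2^i·z_{ii} + c_i·y` for each `i ≥ 1`,
each `2^i·z_{ij}`, and `y`, is not image partition regular: there is a
2-colouring `χ : ℕ → Fin 2` under which no integer values of the variables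
make `y`, every `2^i·z_{ij}`, and every `T_i` positive and monochromatic. -/
theorem rescaled_system_not_image_partition_regular (c : ℕ → ℤ)
    (hc : ∀ n : ℕ, 1 ≤ n → c n * (n : ℤ) ≡ 2 ^ (n - 1) [ZMOD 2 ^ n]) :
    ∃ χ : ℕ → Fin 2,
      ¬ ∃ (y : ℤ) (z : ℕ → ℕ → ℤ) (k : Fin 2),
        (0 < y ∧ χ y.toNat = k) ∧
        (∀ i j : ℕ, 1 ≤ j → j ≤ i →
          0 < (2 : ℤ) ^ i * z i j ∧ χ ((2 : ℤ) ^ i * z i j).toNat = k) ∧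
        (∀ i : ℕ, 1 ≤ i →
          0 < (∑ j ∈ Finset.Icc 1 i, (2 : ℤ) ^ i * z i j) + c i * y ∧
          χ ((∑ j ∈ Finset.Icc 1 i, (2 : ℤ) ^ i * z i j) + c i * y).toNat = k) := by
  refine ⟨twoAdicColouring, ?_⟩
  rintro ⟨y, z, k, ⟨hy, -⟩, -, hT⟩
  lift y to ℕ using hy.le
  obtain ⟨v, y', hy', rfl⟩ := Nat.exists_eq_two_pow_mul_odd (n := y) (by omega)
  have colour (u : ℕ) (hu : Odd u) : k = if 3 ∣ 2 ^ v * u then 1 else 0 := by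
    have hn : 2 ^ v * u ≠ 0 := mul_ne_zero (by positivity) (by rintro rfl; simp at hu)
    obtain ⟨hpos, hk⟩ := hT _ (Nat.one_le_iff_ne_zero.mpr hn)
    rw [← hk]
    refine twoAdicColouring_of_padicValInt_eq hpos.le hn
      (padicValInt_add_mul_eq_sub_one (u := u) (y' := y') hn (by exact_mod_cast hc _ (by omega))
        (Finset.dvd_sum fun j _ => by exact_mod_cast dvd_mul_right _ _) ?_ ?_ (by push_cast; ring))
    · exact_mod_cast hu.not_two_dvd_nat
    · exact_mod_cast hy'.not_two_dvd_nat
  have h3 : ¬ 3 ∣ 2 ^ v := fun h => by simpa using Nat.Prime.dvd_of_dvd_pow Nat.prime_three h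
  have := (colour 1 odd_one).symm.trans (colour 3 (by decide))
  simp [h3] at this
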